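/- For x, y ∈ S² with 0 < ρ(x,y) < π define the midpoint set M(x,y) = {m ∈ S² : ρ(x,m) = ρ(m,y) and ρ(x,m) + ρ(m,y) ≤ π}. Let p ∈ S², let u be a unit tangent vector at p, and set M∞ = {m ∈ S² : ⟨m,p⟩ = 0 and ⟨m,u⟩ ≥ 0}. Suppose p_i ∈ S² and u_i are unit tangent vectors at p_i with p_i → p and u_i → u, and ℓ_i ∈ (0,π) with ℓ_i → π; set q_i = (cos ℓ_i)·p_i + (sin ℓ_i)·u_i. Then the Hausdorff distance between M(p_i,q_i) and M∞ tends to 0 as i → ∞. -/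

import Mathlib

open scoped RealInnerProductSpace
open Real

noncomputable section

/-- Euclidean 3-space. -/
abbrev E3 : Type := EuclideanSpace ℝ (Fin 3)

/-- The unit sphere S² in ℝ³. -/
def sphere2 : Set E3 := {x : E3 | ‖x‖ = 1}

/-- The round (geodesic) distance ρ(p,q) = arccos⟨p,q⟩ on S². -/
def rho (p q : E3) : ℝ := Real.arccos ⟪p, q⟫

/-- `UnitTangent p v` : `v` is a unit tangent vector at `p`. -/
def UnitTangent (p v : E3) : Prop := ‖v‖ = 1 ∧ ⟪p, v⟫ = 0

/-- The unit-speed great-circle arc γ_{p,v}(t) = (cos t)·p + (sin t)·v. -/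
def geo (p v : E3) (t : ℝ) : E3 := (Real.cos t) • p + (Real.sin t) • v
/-- The midpoint set `M(x,y)`: points `m` of the sphere equidistant from `x`
and `y` with total distance at most `π`. -/
def Mset (x y : E3) : Set E3 :=
  {m ∈ sphere2 | rho x m = rho m y ∧ rho x m + rho m y ≤ π}

/-!
For `0 < ℓ < π` the midpoint set of `p` and `q = γ_{p,u}(ℓ)` is exactly the closed half great
circle with pole `n = γ_{p,u}(ℓ/2 - π/2)` centred at the midpoint `d = γ_{p,u}(ℓ/2)`:
equidistance from `p` and `q` means `m ⊥ q - p`, and `q - p` is a multiple of `n`; the length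
bound means `⟪m, p⟫ ≥ 0`, which on that great circle is `⟪m, d⟫ ≥ 0`. Completing `(n, d)` by
`p × u` gives an orthonormal frame. The linear isometry taking it to the limit frame
`(p, u, p × u)` maps one half circle onto the other and moves unit vectors by at most the sum of
the distances between corresponding frame vectors, which tends to `0` as `ℓ → π`.
-/

open Filter Topology Metric
open scoped Matrix

section HalfGreatCircle

variable {E F : Type*} [NormedAddCommGroup E] [InnerProductSpace ℝ E]
  [NormedAddCommGroup F] [InnerProductSpace ℝ F]

def halfGreatCircle (n d : E) : Set E := {m | ‖m‖ = 1 ∧ ⟪m, n⟫ = 0 ∧ 0 ≤ ⟪m, d⟫}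

theorem LinearIsometryEquiv.map_mem_halfGreatCircle (R : E ≃ₗᵢ[ℝ] F) {n d m : E}
    (hm : m ∈ halfGreatCircle n d) : R m ∈ halfGreatCircle (R n) (R d) := by
  obtain ⟨h1, h2, h3⟩ := hm
  exact ⟨by rwa [R.norm_map], by rwa [R.inner_map_map], by rwa [R.inner_map_map]⟩

variable {ι : Type*} [Fintype ι]

theorem OrthonormalBasis.norm_sub_equiv_le (b b' : OrthonormalBasis ι ℝ E) (x : E) :
    ‖x - b.equiv b' (.refl ι) x‖ ≤ ‖x‖ * ∑ i, ‖b i - b' i‖ := by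
  have hx : x - b.equiv b' (.refl ι) x = ∑ i, b.repr x i • (b i - b' i) := by
    rw [b.equiv_apply]
    nth_rewrite 1 [← b.sum_repr x]
    simp [smul_sub, Finset.sum_sub_distrib]
  rw [hx, Finset.mul_sum]
  refine (norm_sum_le _ _).trans (Finset.sum_le_sum fun i _ => ?_)
  rw [norm_smul, b.repr_apply_apply]
  gcongr
  simpa [b.orthonormal.1 i] using norm_inner_le_norm (𝕜 := ℝ) (b i) x

theorem hausdorffDist_halfGreatCircle_le (b b' : OrthonormalBasis ι ℝ E) (j k : ι) :
    hausdorffDist (halfGreatCircle (b j) (b k)) (halfGreatCircle (b' j) (b' k)) ≤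
      ∑ i, ‖b i - b' i‖ := by
  refine hausdorffDist_le_of_mem_dist (by positivity) (fun m hm => ?_) (fun m hm => ?_)
  · have hR := (b.equiv b' (.refl ι)).map_mem_halfGreatCircle hm
    rw [b.equiv_apply_basis, b.equiv_apply_basis] at hR
    refine ⟨_, hR, ?_⟩
    simpa [dist_eq_norm, hm.1] using b.norm_sub_equiv_le b' m
  · have hR := (b'.equiv b (.refl ι)).map_mem_halfGreatCircle hm
    rw [b'.equiv_apply_basis, b'.equiv_apply_basis] at hR
    refine ⟨_, hR, ?_⟩
    simpa [dist_eq_norm, hm.1, norm_sub_rev (b' _)] using b'.norm_sub_equiv_le b m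

theorem Orthonormal.exists_orthonormalBasis_coe_eq [Nonempty ι] {v : ι → E}
    (hv : Orthonormal ℝ v) (hcard : Fintype.card ι = Module.finrank ℝ E) :
    ∃ b : OrthonormalBasis ι ℝ E, ⇑b = v :=
  ⟨(basisOfOrthonormalOfCardEqFinrank hv hcard).toOrthonormalBasis (by simpa using hv), by simp⟩

theorem tendsto_hausdorffDist_halfGreatCircle {α : Type*} {l : Filter α} {v : α → ι → E}
    {w : ι → E} (hv : ∀ a, Orthonormal ℝ (v a)) (hw : Orthonormal ℝ w)
    (hcard : Fintype.card ι = Module.finrank ℝ E)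
    (hlim : ∀ i, Tendsto (fun a => v a i) l (𝓝 (w i))) (j k : ι) :
    Tendsto (fun a => hausdorffDist (halfGreatCircle (v a j) (v a k))
      (halfGreatCircle (w j) (w k))) l (𝓝 0) := by
  have : Nonempty ι := ⟨j⟩
  choose b hb using fun a => (hv a).exists_orthonormalBasis_coe_eq hcard
  obtain ⟨b', rfl⟩ := hw.exists_orthonormalBasis_coe_eq hcard
  have hsum : Tendsto (fun a => ∑ i, ‖v a i - b' i‖) l (𝓝 0) := by
    simpa using tendsto_finsetSum _ fun i _ => ((hlim i).sub_const (b' i)).norm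
  refine squeeze_zero (fun _ => hausdorffDist_nonneg) (fun a => ?_) hsum
  simpa [hb] using hausdorffDist_halfGreatCircle_le (b a) b' j k

end HalfGreatCircle

def cross (x y : E3) : E3 := WithLp.toLp 2 (WithLp.ofLp x ⨯₃ WithLp.ofLp y)

theorem inner_self_cross (x y : E3) : ⟪x, cross x y⟫ = 0 := by
  simp [cross, EuclideanSpace.inner_eq_star_dotProduct, dotProduct_comm]

theorem inner_cross_self (x y : E3) : ⟪y, cross x y⟫ = 0 := by
  simp [cross, EuclideanSpace.inner_eq_star_dotProduct, dotProduct_comm]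

theorem inner_cross_cross (x y z w : E3) :
    ⟪cross x y, cross z w⟫ = ⟪x, z⟫ * ⟪y, w⟫ - ⟪x, w⟫ * ⟪y, z⟫ := by
  simp only [cross, EuclideanSpace.inner_eq_star_dotProduct, star_trivial]
  rw [cross_dot_cross]
  simp only [dotProduct_comm]
  ring

theorem continuous_cross : Continuous fun q : E3 × E3 => cross q.1 q.2 := by
  unfold cross
  fun_prop

section Geodesic

variable {p u : E3}

theorem inner_geo_left (p u m : E3) (t : ℝ) :
    ⟪geo p u t, m⟫ = cos t * ⟪p, m⟫ + sin t * ⟪u, m⟫ := by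
  simp only [geo, inner_add_left, real_inner_smul_left]

theorem inner_geo_right (p u m : E3) (t : ℝ) :
    ⟪m, geo p u t⟫ = cos t * ⟪m, p⟫ + sin t * ⟪m, u⟫ := by
  simp only [geo, inner_add_right, real_inner_smul_right]

@[simp] theorem geo_zero (p u : E3) : geo p u 0 = p := by simp [geo]

@[simp] theorem geo_pi_div_two (p u : E3) : geo p u (π / 2) = u := by simp [geo]

theorem inner_self_of_mem_sphere2 {x : E3} (hx : x ∈ sphere2) : ⟪x, x⟫ = 1 := by
  simp [show ‖x‖ = 1 from hx]

theorem mem_sphere2_of_inner_self {x : E3} (hx : ⟪x, x⟫ = 1) : x ∈ sphere2 := by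
  rwa [real_inner_self_eq_norm_sq, pow_eq_one_iff_of_nonneg (norm_nonneg x) two_ne_zero] at hx

theorem inner_geo_geo (hp : p ∈ sphere2) (hu : UnitTangent p u) (s t : ℝ) :
    ⟪geo p u s, geo p u t⟫ = cos (s - t) := by
  rw [inner_geo_left, inner_geo_right, inner_geo_right, real_inner_comm p u, hu.2,
    inner_self_of_mem_sphere2 hp, inner_self_of_mem_sphere2 (x := u) hu.1, cos_sub]
  ring

theorem geo_mem_sphere2 (hp : p ∈ sphere2) (hu : UnitTangent p u) (t : ℝ) :
    geo p u t ∈ sphere2 := by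
  apply mem_sphere2_of_inner_self
  rw [inner_geo_geo hp hu, sub_self, cos_zero]

theorem inner_geo_cross (p u : E3) (t : ℝ) : ⟪geo p u t, cross p u⟫ = 0 := by
  simp [inner_geo_left, inner_self_cross, inner_cross_self]

theorem cross_mem_sphere2 (hp : p ∈ sphere2) (hu : UnitTangent p u) : cross p u ∈ sphere2 := by
  apply mem_sphere2_of_inner_self
  rw [inner_cross_cross, inner_self_of_mem_sphere2 hp, inner_self_of_mem_sphere2 (x := u) hu.1,
    real_inner_comm p u, hu.2]
  ring

theorem orthonormal_geo_frame (hp : p ∈ sphere2) (hu : UnitTangent p u) (t : ℝ) :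
    Orthonormal ℝ ![geo p u (t - π / 2), geo p u t, cross p u] := by
  simp [Fin.forall_fin_succ, inner_geo_geo hp hu, inner_geo_cross,
    show ‖cross p u‖ = 1 from cross_mem_sphere2 hp hu,
    show ∀ s, ‖geo p u s‖ = 1 from geo_mem_sphere2 hp hu]

theorem Filter.Tendsto.geo {α : Type*} {l : Filter α} {ps us : α → E3} {ts : α → ℝ} {t : ℝ}
    (hps : Tendsto ps l (𝓝 p)) (hus : Tendsto us l (𝓝 u)) (hts : Tendsto ts l (𝓝 t)) :
    Tendsto (fun a => geo (ps a) (us a) (ts a)) l (𝓝 (geo p u t)) :=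
  (((continuous_cos.tendsto t).comp hts).smul hps).add
    (((continuous_sin.tendsto t).comp hts).smul hus)

end Geodesic

theorem mem_mset_iff {x y m : E3} (hx : x ∈ sphere2) (hy : y ∈ sphere2) :
    m ∈ Mset x y ↔ m ∈ sphere2 ∧ ⟪m, x⟫ = ⟪m, y⟫ ∧ 0 ≤ ⟪m, x⟫ := by
  refine and_congr_right fun hm => ?_
  have hbound : ∀ z ∈ sphere2, ⟪m, z⟫ ∈ Set.Icc (-1 : ℝ) 1 := fun z hz =>
    abs_le.1 (by simpa [show ‖m‖ = 1 from hm, show ‖z‖ = 1 from hz] using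
      abs_real_inner_le_norm m z)
  change arccos ⟪x, m⟫ = arccos ⟪m, y⟫ ∧ arccos ⟪x, m⟫ + arccos ⟪m, y⟫ ≤ π ↔ _
  rw [real_inner_comm m x, arccos_injOn.eq_iff (hbound x hx) (hbound y hy)]
  refine and_congr_right fun h => ?_
  rw [← h, ← arccos_le_pi_div_two]
  constructor <;> intro <;> linarith

theorem mset_geo_eq {p u : E3} (hp : p ∈ sphere2) (hu : UnitTangent p u) {l : ℝ}
    (hl : l ∈ Set.Ioo 0 π) :
    Mset p (geo p u l) = halfGreatCircle (geo p u (l / 2 - π / 2)) (geo p u (l / 2)) := by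
  ext m
  rw [mem_mset_iff hp (geo_mem_sphere2 hp hu l)]
  refine and_congr_right fun _ => ?_
  obtain ⟨hl0, hlπ⟩ := hl
  have hs : 0 < sin (l / 2) := sin_pos_of_pos_of_lt_pi (by linarith) (by linarith [pi_pos])
  have hc : 0 < cos (l / 2) := cos_pos_of_mem_Ioo ⟨by linarith [pi_pos], by linarith⟩
  have hcos : cos l = 2 * cos (l / 2) ^ 2 - 1 := by rw [← cos_two_mul]; ring_nf
  have hsin : sin l = 2 * sin (l / 2) * cos (l / 2) := by rw [← sin_two_mul]; ring_nf
  have hsc := sin_sq_add_cos_sq (l / 2)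
  rw [inner_geo_right, inner_geo_right, inner_geo_right, cos_sub_pi_div_two, sin_sub_pi_div_two,
    hcos, hsin]
  generalize sin (l / 2) = s, cos (l / 2) = c, ⟪m, p⟫ = A, ⟪m, u⟫ = B at *
  -- `p = cos (l/2) • d + sin (l/2) • n`
  have hA : A = c * (c * A + s * B) + s * (s * A - c * B) := by linear_combination (-A) * hsc
  constructor
  · rintro ⟨h, hA0⟩
    have hn : s * (s * A - c * B) = 0 := by linear_combination (1 / 2 : ℝ) * h + A * hsc
    have hn := (mul_eq_zero.1 hn).resolve_left hs.ne'
    refine ⟨by linarith, nonneg_of_mul_nonneg_right ?_ hc⟩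
    linarith
  · rintro ⟨hn, hd⟩
    have hn : s * A - c * B = 0 := by linarith
    refine ⟨by linear_combination (2 * s) * hn - 2 * A * hsc, ?_⟩
    rw [hA, hn]
    positivity

/-- If `pᵢ → p`, `uᵢ → u` (unit tangent vectors at `pᵢ`, resp. `p`), and
`ℓᵢ → π` with `ℓᵢ ∈ (0,π)`, and `qᵢ = γ_{pᵢ,uᵢ}(ℓᵢ)`, then the midpoint sets
`M(pᵢ,qᵢ)` converge in Hausdorff distance to
`M∞ = {m ∈ S² : ⟨m,p⟩ = 0, ⟨m,u⟩ ≥ 0}`. -/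
theorem midpoint_sets_converge
    (p u : E3) (hp : p ∈ sphere2) (hu : UnitTangent p u)
    (ps us : ℕ → E3) (hps : ∀ i, ps i ∈ sphere2)
    (hus : ∀ i, UnitTangent (ps i) (us i))
    (hp' : Filter.Tendsto ps Filter.atTop (nhds p))
    (hu' : Filter.Tendsto us Filter.atTop (nhds u))
    (ℓ : ℕ → ℝ) (hℓ : ∀ i, ℓ i ∈ Set.Ioo (0:ℝ) π)
    (hℓ' : Filter.Tendsto ℓ Filter.atTop (nhds π)) :
    Filter.Tendsto
      (fun i => Metric.hausdorffDist (Mset (ps i) (geo (ps i) (us i) (ℓ i)))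
        {m ∈ sphere2 | ⟪m, p⟫ = 0 ∧ 0 ≤ ⟪m, u⟫})
      Filter.atTop (nhds 0) := by
  have hhalf : Tendsto (fun i => ℓ i / 2) atTop (𝓝 (π / 2)) := hℓ'.div_const 2
  have hframes : ∀ k : Fin 3,
      Tendsto (fun i => ![geo (ps i) (us i) (ℓ i / 2 - π / 2), geo (ps i) (us i) (ℓ i / 2),
        cross (ps i) (us i)] k) atTop (𝓝 (![p, u, cross p u] k)) := by
    intro k
    fin_cases k
    · simpa using hp'.geo hu' (hhalf.sub_const (π / 2))
    · simpa using hp'.geo hu' hhalf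
    · simpa [Function.comp_def] using
        (continuous_cross.tendsto (p, u)).comp (hp'.prodMk_nhds hu')
  have hlimit : Orthonormal ℝ ![p, u, cross p u] := by
    simpa using orthonormal_geo_frame hp hu (π / 2)
  refine (tendsto_hausdorffDist_halfGreatCircle (fun i => orthonormal_geo_frame (hps i) (hus i) _)
    hlimit (by simp) hframes 0 1).congr fun i => ?_
  rw [mset_geo_eq (hps i) (hus i) (hℓ i)]
  rfl
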